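/- For every unit vector x ∈ ℝ^7 (with respect to the Euclidean norm), the alternating bilinear form ω_x(v,w) = φ₀(x,v,w) is nondegenerate on the orthogonal complement x^⊥ of x: for every nonzero v ∈ x^⊥ there exists w ∈ x^⊥ such that φ₀(x,v,w) ≠ 0. (This is the claim that the 2-form ω = (e_r ⌟ φ₀)|_{r=1} induced on the unit 6-sphere by the G₂ structure of ℝ^7 is nondegenerate.) -/

import Mathlib

/-!
The witness is the octonionic cross product `w = x × v`, the vector with
`φ₀(u, v, w) = ⟪u × v, w⟫`. It is orthogonal to `x` because `φ₀` is alternating, and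
`φ₀(x, v, x × v) = ‖x × v‖² = ‖x‖² ‖v‖² - ⟪x, v⟫² = ‖v‖² > 0`
by the seven-dimensional Lagrange identity.
-/

noncomputable section

open scoped RealInnerProductSpace

/-- The 3-form `dx_i ∧ dx_j ∧ dx_k` evaluated on vectors `(u,v,w)` of Euclidean ℝ^7. -/
def dx3 (i j k : Fin 7) (u v w : EuclideanSpace ℝ (Fin 7)) : ℝ :=
  u i * (v j * w k - v k * w j) - v i * (u j * w k - u k * w j)
    + w i * (u j * v k - u k * v j)

/-- The G₂ 3-form φ₀ = dx₁₂₃ + dx₁₄₅ + dx₁₆₇ + dx₂₄₆ − dx₂₅₇ − dx₃₄₇ − dx₃₅₆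
(0-indexed coordinates). -/
def phi0 (u v w : EuclideanSpace ℝ (Fin 7)) : ℝ :=
  dx3 0 1 2 u v w + dx3 0 3 4 u v w + dx3 0 5 6 u v w + dx3 1 3 5 u v w
    - dx3 1 4 6 u v w - dx3 2 3 6 u v w - dx3 2 4 5 u v w

/-- Coordinate `k` is `φ₀(u, v, e_k)`. -/
def cross7 (u v : EuclideanSpace ℝ (Fin 7)) : EuclideanSpace ℝ (Fin 7) :=
  let c : Fin 7 → Fin 7 → ℝ := fun a b => u a * v b - u b * v a
  !₂[c 1 2 + c 3 4 + c 5 6, c 2 0 + c 3 5 - c 4 6, c 0 1 - c 3 6 - c 4 5,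
    c 4 0 + c 5 1 - c 6 2, c 0 3 - c 6 1 - c 5 2, c 6 0 + c 1 3 - c 2 4,
    c 0 5 - c 1 4 - c 2 3]

lemma phi0_eq_inner_cross7 (u v w : EuclideanSpace ℝ (Fin 7)) :
    phi0 u v w = ⟪cross7 u v, w⟫ := by
  simp only [phi0, dx3, cross7, PiLp.inner_apply, RCLike.inner_apply, conj_trivial,
    Fin.sum_univ_seven, Matrix.cons_val_zero, Matrix.cons_val_one, Matrix.cons_val]
  ring

lemma inner_self_cross7 (u v : EuclideanSpace ℝ (Fin 7)) : ⟪u, cross7 u v⟫ = 0 := by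
  simp only [cross7, PiLp.inner_apply, RCLike.inner_apply, conj_trivial,
    Fin.sum_univ_seven, Matrix.cons_val_zero, Matrix.cons_val_one, Matrix.cons_val]
  ring

lemma norm_cross7_sq (u v : EuclideanSpace ℝ (Fin 7)) :
    ‖cross7 u v‖ ^ 2 = ‖u‖ ^ 2 * ‖v‖ ^ 2 - ⟪u, v⟫ ^ 2 := by
  simp only [← real_inner_self_eq_norm_sq, cross7, PiLp.inner_apply, RCLike.inner_apply,
    conj_trivial, Fin.sum_univ_seven, Matrix.cons_val_zero, Matrix.cons_val_one, Matrix.cons_val]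
  ring

/-- For every unit vector x ∈ ℝ^7, the alternating bilinear form
ω_x(v,w) = φ₀(x,v,w) is nondegenerate on the orthogonal complement x^⊥: every nonzero
tangent vector v at x ∈ S⁶ pairs nontrivially with some tangent vector w. -/
theorem sphere_two_form_nondegenerate (x : EuclideanSpace ℝ (Fin 7)) (hx : ‖x‖ = 1)
    (v : EuclideanSpace ℝ (Fin 7)) (hxv : ⟪x, v⟫ = 0) (hv : v ≠ 0) :
    ∃ w : EuclideanSpace ℝ (Fin 7), ⟪x, w⟫ = 0 ∧ phi0 x v w ≠ 0 := by
  refine ⟨cross7 x v, inner_self_cross7 x v, ?_⟩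
  have hω : phi0 x v (cross7 x v) = ‖v‖ ^ 2 := by
    rw [phi0_eq_inner_cross7, real_inner_self_eq_norm_sq, norm_cross7_sq, hx, hxv]
    ring
  rw [hω]
  exact pow_ne_zero 2 (norm_ne_zero_iff.mpr hv)

end
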